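/- arXiv:1708.06228 — 5 statements merged into one kernel-verified Lean document; each statement's English description precedes it below -/
import Mathlib

section
/- Let b ≥ 2 and S ⊆ ℕ. For a digit a ∈ {0,...,b-1}, define Δ(S,a) = {n ∈ ℕ : n·b + a ∈ S}. Then S is ultimately periodic if and only if Δ(S,a) is ultimately periodic for every digit a ∈ {0,...,b-1}. -/
def UltPeriodic (S : Set ℕ) : Prop :=
  ∃ m, ∃ p ≥ 1, ∀ n ≥ m, (n ∈ S ↔ n + p ∈ S)

def Delta (b : ℕ) (S : Set ℕ) (a : ℕ) : Set ℕ := {n | n * b + a ∈ S}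

/-!
Each digit set `Δ(S, a)` is `S` read along the residue class `a mod b`, rescaled by `b`. A
period `p` of `S` from `m` on is a period of every `Δ(S, a)` once `bp` is seen to be one of `S`.
Conversely, finitely many digit sets share a threshold `m` and a period `p` (take the maximum
and the product), and then `bp` is a period of `S` from `bm` on, since `n = qb + a` and
`n + bp = (q + p)b + a`.
-/

def HasPeriodFrom (S : Set ℕ) (m p : ℕ) : Prop :=
  ∀ n ≥ m, (n ∈ S ↔ n + p ∈ S)

namespace HasPeriodFrom

variable {S : Set ℕ} {m p : ℕ}

theorem mul (h : HasPeriodFrom S m p) (k : ℕ) : HasPeriodFrom S m (k * p) := by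
  induction k with
  | zero => simp [HasPeriodFrom]
  | succ k ih =>
    intro n hn
    rw [ih n hn, h (n + k * p) (by omega), add_mul, one_mul, add_assoc]

theorem dvd (h : HasPeriodFrom S m p) {q : ℕ} (hpq : p ∣ q) : HasPeriodFrom S m q := by
  obtain ⟨k, rfl⟩ := hpq
  simpa [mul_comm] using h.mul k

theorem mono (h : HasPeriodFrom S m p) {m' : ℕ} (hm : m ≤ m') : HasPeriodFrom S m' p :=
  fun n hn => h n (hm.trans hn)

theorem delta (h : HasPeriodFrom S m p) {b : ℕ} (hb : 0 < b) (a : ℕ) :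
    HasPeriodFrom (Delta b S a) m p := by
  intro n hn
  have hnb : n * b + a ≥ m := by nlinarith
  simp only [Delta, Set.mem_ofPred_eq]
  rw [(h.mul b) _ hnb]
  ring_nf

theorem of_delta {b : ℕ} (hb : 0 < b) (h : ∀ a < b, HasPeriodFrom (Delta b S a) m p) :
    HasPeriodFrom S (m * b) (p * b) := by
  intro n hn
  have hdigit : n % b < b := Nat.mod_lt n hb
  have hquot : m ≤ n / b := (Nat.le_div_iff_mul_le hb).mpr hn
  have key := h (n % b) hdigit (n / b) hquot
  simp only [Delta, Set.mem_ofPred_eq] at key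
  rwa [add_mul, add_right_comm, Nat.div_add_mod'] at key

end HasPeriodFrom

theorem exists_common_hasPeriodFrom {ι : Type*} (s : Finset ι) (S : ι → Set ℕ)
    (h : ∀ i ∈ s, UltPeriodic (S i)) : ∃ m, ∃ p ≥ 1, ∀ i ∈ s, HasPeriodFrom (S i) m p := by
  choose! m p hp hper using h
  exact ⟨s.sup m, ∏ i ∈ s, p i, Finset.one_le_prod' hp, fun i hi =>
    (HasPeriodFrom.mono (hper i hi) (Finset.le_sup hi)).dvd (Finset.dvd_prod_of_mem p hi)⟩

theorem stmt_0 (b : ℕ) (hb : 2 ≤ b) (S : Set ℕ) :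
    UltPeriodic S ↔ ∀ a < b, UltPeriodic (Delta b S a) := by
  have hb0 : 0 < b := by omega
  constructor
  · rintro ⟨m, p, hp, hper⟩ a -
    exact ⟨m, p, hp, HasPeriodFrom.delta hper hb0 a⟩
  · intro h
    obtain ⟨m, p, hp, hper⟩ :=
      exists_common_hasPeriodFrom (Finset.range b) (Delta b S) (by simpa using h)
    exact ⟨m * b, p * b, Nat.mul_le_mul hp hb0,
      HasPeriodFrom.of_delta hb0 fun a ha => hper a (Finset.mem_range.mpr ha)⟩
end

section
/- Let b ≥ 2, S ⊆ ℕ ultimately periodic with preperiod m and period p, and a a digit with 0 ≤ a < b. Then Δ(S,a) = {n : nb + a ∈ S} has preperiod at most ⌈(m - a)/b⌉ and period dividing p / gcd(p,b). In particular the preperiod of Δ(S,a) is at most m and the smallest period of Δ(S,a) is at most p. -/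
def HasPreperiodPeriod (S : Set ℕ) (m p : ℕ) : Prop := ∀ n ≥ m, (n ∈ S ↔ n + p ∈ S)

namespace HasPreperiodPeriod

variable {S : Set ℕ} {m p : ℕ}

theorem mul_period (h : HasPreperiodPeriod S m p) (k : ℕ) : HasPreperiodPeriod S m (k * p) := by
  induction k with
  | zero => simp [HasPreperiodPeriod]
  | succ k ih =>
    intro n hn
    rw [ih n hn, h (n + k * p) (by omega), add_mul, one_mul, add_assoc]

theorem of_dvd {q : ℕ} (h : HasPreperiodPeriod S m p) (hpq : p ∣ q) : HasPreperiodPeriod S m q := by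
  obtain ⟨k, rfl⟩ := hpq
  simpa only [mul_comm] using h.mul_period k

theorem delta {b a m' q : ℕ} (h : HasPreperiodPeriod S m p) (hm : m ≤ m' * b + a)
    (hq : p ∣ q * b) : HasPreperiodPeriod (Delta b S a) m' q := by
  intro n hn
  have hnm : m ≤ n * b + a := hm.trans (by gcongr)
  have hshift : (n + q) * b + a = n * b + a + q * b := by ring
  simp only [Delta, Set.mem_ofPred_eq, hshift]
  exact h.of_dvd hq _ hnm

end HasPreperiodPeriod

theorem Nat.div_gcd_mul_eq_lcm (p b : ℕ) : p / Nat.gcd p b * b = Nat.lcm p b := by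
  rw [Nat.lcm, Nat.div_mul_right_comm (Nat.gcd_dvd_left p b)]

theorem Nat.le_sub_ceilDiv_mul_add {b : ℕ} (hb : 0 < b) (m a : ℕ) : m ≤ (m - a) ⌈/⌉ b * b + a := by
  have := le_smul_ceilDiv (b := m - a) hb
  rw [smul_eq_mul, mul_comm] at this
  omega

theorem stmt_2_general (b : ℕ) (hb : 2 ≤ b) (S : Set ℕ) (m p : ℕ)
    (hS : ∀ n ≥ m, (n ∈ S ↔ n + p ∈ S)) (a : ℕ) :
    (∀ n ≥ (m - a + b - 1) / b,
        (n ∈ Delta b S a ↔ n + p / Nat.gcd p b ∈ Delta b S a)) ∧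
    (∀ n ≥ m, (n ∈ Delta b S a ↔ n + p / Nat.gcd p b ∈ Delta b S a)) ∧
    p / Nat.gcd p b ≤ p := by
  have hb0 : 0 < b := by omega
  -- `(m - a) ⌈/⌉ b` is by definition `(m - a + b - 1) / b`.
  have hΔ : HasPreperiodPeriod (Delta b S a) ((m - a) ⌈/⌉ b) (p / Nat.gcd p b) :=
    HasPreperiodPeriod.delta hS (Nat.le_sub_ceilDiv_mul_add hb0 m a)
      (Nat.div_gcd_mul_eq_lcm p b ▸ Nat.dvd_lcm_left p b)
  have hpre : (m - a) ⌈/⌉ b ≤ m :=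
    (ceilDiv_le_iff_le_mul hb0).2 ((m.sub_le a).trans (Nat.le_mul_of_pos_left m hb0))
  exact ⟨hΔ, fun n hn => hΔ n (hpre.trans hn), Nat.div_le_self _ _⟩

theorem stmt_2 (b : ℕ) (hb : 2 ≤ b) (S : Set ℕ) (m p : ℕ) (hp : 1 ≤ p)
    (hS : ∀ n ≥ m, (n ∈ S ↔ n + p ∈ S)) (a : ℕ) (ha : a < b) :
    (∀ n ≥ (m - a + b - 1) / b,
        (n ∈ Delta b S a ↔ n + p / Nat.gcd p b ∈ Delta b S a)) ∧
    (∀ n ≥ m, (n ∈ Delta b S a ↔ n + p / Nat.gcd p b ∈ Delta b S a)) ∧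
    p / Nat.gcd p b ≤ p :=
  stmt_2_general b hb S m p hS a
end

section
/- Let b ≥ 2, S ⊆ ℕ with smallest period p (for all n ≥ m, n ∈ S ↔ n+p ∈ S, and p minimal among such periods for some preperiod). If p is not coprime with b, then for every digit a ∈ {0,...,b-1}, the smallest period of Δ(S,a) = {n : nb+a ∈ S} is strictly smaller than p. -/
/-- The set of (eventual) periods of `S`. -/
def Periods (S : Set ℕ) : Set ℕ :=
  {p | 1 ≤ p ∧ ∃ m, ∀ n ≥ m, (n ∈ S ↔ n + p ∈ S)}

lemma iff_add_mul_of_periodic {S : Set ℕ} {p m : ℕ} (hm : ∀ n ≥ m, (n ∈ S ↔ n + p ∈ S)) (k : ℕ) :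
    ∀ n ≥ m, (n ∈ S ↔ n + k * p ∈ S) := by
  induction k with
  | zero => simp
  | succ k ih =>
    intro n hn
    rw [ih n hn, hm (n + k * p) (hn.trans (Nat.le_add_right _ _)), add_assoc, ← Nat.succ_mul]

lemma mem_periods_delta_of_dvd {b p q : ℕ} {S : Set ℕ} (hp : p ∈ Periods S) (hq : 1 ≤ q)
    (hdvd : p ∣ q * b) (a : ℕ) : q ∈ Periods (Delta b S a) := by
  obtain ⟨-, m, hm⟩ := hp
  obtain ⟨c, hc⟩ := hdvd
  refine ⟨hq, m, fun n hn => ?_⟩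
  change n * b + a ∈ S ↔ (n + q) * b + a ∈ S
  rcases b.eq_zero_or_pos with rfl | hb
  · simp
  have hshift : (n + q) * b + a = n * b + a + c * p := by rw [add_mul, hc]; ring
  rw [hshift]
  exact iff_add_mul_of_periodic hm c _ (hn.trans (Nat.le_mul_of_pos_right n hb) |>.trans le_self_add)

lemma div_gcd_mem_periods_delta {b p : ℕ} {S : Set ℕ} (hp : p ∈ Periods S) (a : ℕ) :
    p / Nat.gcd p b ∈ Periods (Delta b S a) := by
  have hgcd_pos : 0 < Nat.gcd p b := Nat.gcd_pos_of_pos_left b hp.1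
  refine mem_periods_delta_of_dvd hp (Nat.div_pos (Nat.gcd_le_left b hp.1) hgcd_pos) ?_ a
  rw [Nat.div_mul_right_comm (Nat.gcd_dvd_left p b)]
  exact Nat.dvd_lcm_left p b

theorem stmt_3_general (b : ℕ) (S : Set ℕ) (p : ℕ)
    (hup : p ∈ Periods S)
    (hncop : ¬ Nat.Coprime p b) :
    ∀ a < b, sInf (Periods (Delta b S a)) < p := by
  intro a _
  have hgcd : 1 < Nat.gcd p b := lt_of_le_of_ne (Nat.gcd_pos_of_pos_left b hup.1) (Ne.symm hncop)
  calc sInf (Periods (Delta b S a)) ≤ p / Nat.gcd p b :=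
        Nat.sInf_le (div_gcd_mem_periods_delta hup a)
    _ < p := Nat.div_lt_self hup.1 hgcd

theorem stmt_3 (b : ℕ) (hb : 2 ≤ b) (S : Set ℕ) (p : ℕ)
    (hup : p ∈ Periods S) (hmin : p = sInf (Periods S))
    (hncop : ¬ Nat.Coprime p b) :
    ∀ a < b, sInf (Periods (Delta b S a)) < p :=
  stmt_3_general b S p hup hncop
end

section
/- Let b ≥ 2 and let m be the smallest preperiod of an ultimately periodic set S ⊆ ℕ. For any nonzero digit a ∈ {1,...,b-1}, if m > 0 then the smallest preperiod of Δ(S,a) = {n : nb+a ∈ S} is strictly smaller than m. -/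
/-- The set of valid preperiods of `S`. -/
def Preperiods (S : Set ℕ) : Set ℕ :=
  {m | ∃ p ≥ 1, ∀ n ≥ m, (n ∈ S ↔ n + p ∈ S)}

lemma mem_iff_add_mul_of_periodic_from {S : Set ℕ} {m p : ℕ}
    (hp : ∀ n ≥ m, (n ∈ S ↔ n + p ∈ S)) (k : ℕ) {n : ℕ} (hn : m ≤ n) :
    n ∈ S ↔ n + k * p ∈ S := by
  induction k with
  | zero => simp
  | succ k ih =>
    rw [ih, hp _ (hn.trans (Nat.le_add_right _ _)), add_one_mul, add_assoc]

lemma sub_one_mem_preperiods_delta {b a m : ℕ} {S : Set ℕ} (hb : 0 < b) (ha : 1 ≤ a)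
    (hm : m ∈ Preperiods S) : m - 1 ∈ Preperiods (Delta b S a) := by
  obtain ⟨p, hp1, hp⟩ := hm
  refine ⟨p, hp1, fun n hn => ?_⟩
  have hdigit : m ≤ n * b + a := by
    have : n ≤ n * b := Nat.le_mul_of_pos_right n hb
    omega
  have hshift : (n + p) * b + a = n * b + a + b * p := by ring
  simp only [Delta, Set.mem_ofPred_eq, hshift]
  exact mem_iff_add_mul_of_periodic_from hp b hdigit

theorem stmt_4_general (b : ℕ) (hb : 2 ≤ b) (S : Set ℕ) (m : ℕ)
    (hup : m ∈ Preperiods S) (hm : 0 < m)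
    (a : ℕ) (ha1 : 1 ≤ a) :
    sInf (Preperiods (Delta b S a)) < m :=
  (Nat.sInf_le (sub_one_mem_preperiods_delta (by omega) ha1 hup)).trans_lt (by omega)

theorem stmt_4 (b : ℕ) (hb : 2 ≤ b) (S : Set ℕ) (m : ℕ)
    (hup : m ∈ Preperiods S) (hmin : m = sInf (Preperiods S)) (hm : 0 < m)
    (a : ℕ) (ha1 : 1 ≤ a) (ha2 : a < b) :
    sInf (Preperiods (Delta b S a)) < m :=
  stmt_4_general b hb S m hup hm a ha1
end

section
/- Let b ≥ 2 and S ⊆ ℕ ultimately periodic. The collection of all sets Δ-reachable from S (i.e., sets of the form Δ(S,u) for words u over {0,...,b-1}, where Δ(S,a) = {n : nb+a ∈ S} extended to words) is finite. -/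
/-- `Delta` extended to words. -/
def DeltaW (b : ℕ) (S : Set ℕ) : List ℕ → Set ℕ
  | [] => S
  | a :: u => DeltaW b (Delta b S a) u

def PeriodicFrom (m p : ℕ) (T : Set ℕ) : Prop :=
  ∀ n ≥ m, (n ∈ T ↔ n + p ∈ T)

namespace PeriodicFrom

variable {m p : ℕ} {T : Set ℕ}

theorem mem_add_mul_iff (hT : PeriodicFrom m p T) {k : ℕ} (hk : m ≤ k) (j : ℕ) :
    k + p * j ∈ T ↔ k ∈ T := by
  induction j with
  | zero => simp
  | succ j ih =>
    rw [Nat.mul_succ, ← Nat.add_assoc, ← hT _ (hk.trans (Nat.le_add_right _ _)), ih]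

theorem mem_iff_mod (hT : PeriodicFrom m p T) {n : ℕ} (hn : m ≤ n) :
    n ∈ T ↔ m + (n - m) % p ∈ T := by
  have hdecomp : n = m + (n - m) % p + p * ((n - m) / p) := by
    have := Nat.mod_add_div (n - m) p
    omega
  conv_lhs => rw [hdecomp]
  exact hT.mem_add_mul_iff (Nat.le_add_right _ _) _

theorem eq_of_forall_lt_iff (hp : 0 < p) {T' : Set ℕ} (hT : PeriodicFrom m p T)
    (hT' : PeriodicFrom m p T') (h : ∀ k < m + p, (k ∈ T ↔ k ∈ T')) : T = T' := by
  ext n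
  rcases lt_or_ge n m with hn | hn
  · exact h n (by omega)
  · rw [hT.mem_iff_mod hn, hT'.mem_iff_mod hn]
    exact h _ (by have := Nat.mod_lt (n - m) hp; omega)

theorem delta (hT : PeriodicFrom m p T) (b a : ℕ) : PeriodicFrom m p (Delta b T a) := by
  intro n hn
  rcases Nat.eq_zero_or_pos b with rfl | hb
  · simp [Delta]
  have hshift : (n + p) * b + a = n * b + a + p * b := by ring
  simp only [Delta, Set.mem_ofPred_eq, hshift]
  exact (hT.mem_add_mul_iff (by nlinarith) b).symm

theorem deltaW (hT : PeriodicFrom m p T) (b : ℕ) (u : List ℕ) :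
    PeriodicFrom m p (DeltaW b T u) := by
  induction u generalizing T with
  | nil => exact hT
  | cons a u ih => exact ih (hT.delta b a)

end PeriodicFrom

theorem setOf_periodicFrom_finite (m : ℕ) {p : ℕ} (hp : 0 < p) :
    {T : Set ℕ | PeriodicFrom m p T}.Finite := by
  rw [← Set.finite_coe_iff]
  refine Finite.of_injective
    (fun (T : {T | PeriodicFrom m p T}) (i : Fin (m + p)) => (i : ℕ) ∈ T.1) ?_
  rintro ⟨T, hT⟩ ⟨T', hT'⟩ h
  exact Subtype.ext <| hT.eq_of_forall_lt_iff hp hT' fun k hk => Iff.of_eq (congrFun h ⟨k, hk⟩)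

theorem stmt_11_general (b : ℕ) (S : Set ℕ) (hS : UltPeriodic S) :
    {T : Set ℕ | ∃ u : List ℕ, (∀ d ∈ u, d < b) ∧ DeltaW b S u = T}.Finite := by
  obtain ⟨m, p, hp, hS⟩ := hS
  refine (setOf_periodicFrom_finite m hp).subset ?_
  rintro T ⟨u, -, rfl⟩
  exact PeriodicFrom.deltaW hS b u

theorem stmt_11 (b : ℕ) (hb : 2 ≤ b) (S : Set ℕ) (hS : UltPeriodic S) :
    {T : Set ℕ | ∃ u : List ℕ, (∀ d ∈ u, d < b) ∧ DeltaW b S u = T}.Finite :=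
  stmt_11_general b S hS
end
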